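/- For every integer n ≥ 0, the set of level data L such that B_L = 2n and such that L is empty, or the largest level of L is < 1, or the largest level of L is > 2 (i.e. L is a locally minimal level datum at infinity), is finite. -/

import Mathlib

open Finset

/-- The ramification order of a level datum: the least common denominator of its
elements, i.e. the lcm of the denominators (`ram ∅ = 1`). -/
def ram (L : Finset ℚ) : ℕ := L.lcm Rat.den

/-- The least common denominator `d` of the "initial segment" of `L` consisting of the
elements `≥ k` (the elements come in decreasing order `k₀ > k₁ > ⋯`). -/
def segLcm (L : Finset ℚ) (k : ℚ) : ℕ := (L.filter (fun x => k ≤ x)).lcm Rat.den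

/-- A level datum: a finite set of positive rationals such that the least common
denominators `d₀, d₁, …` of the initial segments (for the decreasing order) are all `≥ 2`
and form a strictly increasing sequence.  (Since the `d_j` are increasing, requiring
`d_j ≥ 2` for all `j` is equivalent to `d₀ ≥ 2`, i.e. to the largest element not being
an integer.) -/
def IsLevelDatum (L : Finset ℚ) : Prop :=
  (∀ k ∈ L, 0 < k) ∧
  (∀ k ∈ L, 2 ≤ segLcm L k) ∧
  (∀ k ∈ L, ∀ k' ∈ L, k' < k → segLcm L k < segLcm L k')

/-- The largest level of `L` (junk value `0` for `L = ∅`). -/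
def maxLevel (L : Finset ℚ) : ℚ := WithBot.unbotD 0 L.max

/-- The numerator `s(k) := k · Ram(L) ∈ ℤ` of a level `k` of `L`. -/
def numer (L : Finset ℚ) (k : ℚ) : ℤ := (k * (ram L : ℚ)).num

/-- `σ := k₀ · Ram(L) ∈ ℤ`, the numerator of the largest level. -/
def sigma0 (L : Finset ℚ) : ℤ := numer L (maxLevel L)

/-- `gcd(s(x) for x ∈ s, Ram L)` : the gcd of `Ram L` together with the numerators of the
elements of a subset `s ⊆ L`. -/
def gSeg (L : Finset ℚ) (s : Finset ℚ) : ℕ :=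
  Nat.gcd (ram L) (s.gcd (fun x => (numer L x).natAbs))

/-- The quantity
`B_L = (r − (s₀,r))·s₀ + Σᵢ ((s₀,…,s_{i−1},r) − (s₀,…,s_i,r))·s_i − r² + 1`
(`B_∅ = 0`), equal to the dimension of the elementary wild character variety. -/
def B (L : Finset ℚ) : ℤ :=
  (∑ k ∈ L, ((gSeg L (L.filter (fun x => k < x)) : ℤ)
      - (gSeg L (L.filter (fun x => k ≤ x)) : ℤ)) * numer L k)
    - (ram L : ℤ) ^ 2 + 1

/-- A level datum is locally minimal at infinity if it is empty, or its largest level is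
`< 1` or `> 2`. -/
def LocallyMinimal (L : Finset ℚ) : Prop :=
  L = ∅ ∨ maxLevel L < 1 ∨ 2 < maxLevel L

/-- Rescaling of a level datum by a factor `c`, removing the integer elements. -/
def rescale (L : Finset ℚ) (c : ℚ) : Finset ℚ :=
  (L.image (fun k => c * k)).filter (fun x => x.den ≠ 1)

/-- The local simplification map `S_∞` on level data: if the largest level `k₀` satisfies
`1 < k₀ < 2`, rescale all the levels by `ρ/(σ−ρ)` (where `ρ = Ram L`, `σ = k₀·ρ`) and
remove the integer levels; otherwise do nothing. -/
def Sinf (L : Finset ℚ) : Finset ℚ :=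
  if 1 < maxLevel L ∧ maxLevel L < 2 then
    rescale L ((ram L : ℚ) / ((sigma0 L : ℚ) - (ram L : ℚ)))
  else L

/-
Write `r = Ram L`, `s_k = k·r` and `c_k ≥ 0` for the coefficient of `s_k` in `B_L`; the `c_k`
telescope to `r − gcd(r, s_k : k ∈ L)`. If the largest level `k₀` is `< 1`, every `s_k` is
`< r`, so `B_L ≤ (r − 1)² − r² + 1 < 0`. Otherwise keep only the term of `k₀`:
`B_L ≥ (r − g₀)·s₀ − r² + 1` with `g₀ = gcd(r, s₀)` a proper divisor of `r` (as `k₀` is not an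
integer), so `r − g₀ ≥ r/2`; when `k₀ > 2`, i.e. `s₀ > 2r`, this gives `2·B_L ≥ r + 2`, and in
any case `k₀ ≤ B_L + r²`. So for `B_L = 2n` both the denominators and the sizes of the levels
are bounded, leaving finitely many candidates.
-/

theorem Finset.sum_filter_lt_sub_filter_le {α β : Type*} [LinearOrder α] [AddCommGroup β]
    (G : Finset α → β) (L : Finset α) :
    ∑ k ∈ L, (G (L.filter (k < ·)) - G (L.filter (k ≤ ·))) = G ∅ - G L := by
  induction L using Finset.induction_on_min with
  | empty => simp
  | insert a s ha ih =>
    have has : a ∉ s := fun h => lt_irrefl a (ha a h)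
    have hlt : (insert a s).filter (a < ·) = s := by
      rw [filter_insert, if_neg (lt_irrefl a)]
      exact filter_true_of_mem ha
    have hle : (insert a s).filter (a ≤ ·) = insert a s :=
      filter_true_of_mem fun x hx => (mem_insert.1 hx).elim ge_of_eq fun hx => (ha x hx).le
    have hrest : ∀ k ∈ s, G ((insert a s).filter (k < ·)) - G ((insert a s).filter (k ≤ ·))
        = G (s.filter (k < ·)) - G (s.filter (k ≤ ·)) := fun k hk => by
      rw [filter_insert, filter_insert, if_neg (ha k hk).le.not_gt, if_neg (ha k hk).not_ge]
    rw [sum_insert has, hlt, hle, sum_congr rfl hrest, ih]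
    abel

lemma maxLevel_eq_max' {L : Finset ℚ} (hne : L.Nonempty) : maxLevel L = L.max' hne := by
  rw [maxLevel, ← coe_max' hne]
  rfl

lemma filter_max'_le {L : Finset ℚ} (hne : L.Nonempty) :
    L.filter (L.max' hne ≤ ·) = {L.max' hne} := by
  ext x
  simp only [mem_filter, mem_singleton]
  refine ⟨fun ⟨hx, hle⟩ => le_antisymm (le_max' L x hx) hle, ?_⟩
  rintro rfl
  exact ⟨max'_mem L hne, le_rfl⟩

lemma filter_max'_lt {L : Finset ℚ} (hne : L.Nonempty) : L.filter (L.max' hne < ·) = ∅ :=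
  filter_eq_empty_iff.2 fun x hx => (le_max' L x hx).not_gt

section Numerators

variable {L : Finset ℚ} {k k' : ℚ}

lemma ram_pos (L : Finset ℚ) : 0 < ram L :=
  Nat.pos_of_ne_zero fun h => by
    obtain ⟨q, -, hq⟩ := lcm_eq_zero_iff.1 h
    exact q.den_nz hq

lemma den_dvd_ram (hk : k ∈ L) : k.den ∣ ram L := dvd_lcm hk

lemma cast_numer (hk : k ∈ L) : (numer L k : ℚ) = k * ram L := by
  obtain ⟨c, hc⟩ := den_dvd_ram hk
  have h : k * (ram L : ℚ) = ((k.num * c : ℤ) : ℚ) := by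
    rw [hc]
    push_cast
    rw [← mul_assoc, Rat.mul_den_eq_num]
  rw [numer, h, Rat.num_intCast]

lemma numer_pos (hk : k ∈ L) (hk0 : 0 < k) : 0 < numer L k := by
  have h : (0 : ℚ) < numer L k := by
    rw [cast_numer hk]
    exact mul_pos hk0 (by exact_mod_cast ram_pos L)
  exact_mod_cast h

lemma numer_le_numer (hk : k ∈ L) (hk' : k' ∈ L) (h : k ≤ k') : numer L k ≤ numer L k' := by
  have h' : (numer L k : ℚ) ≤ numer L k' := by
    rw [cast_numer hk, cast_numer hk']
    exact mul_le_mul_of_nonneg_right h (Nat.cast_nonneg _)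
  exact_mod_cast h'

end Numerators

section Gcds

variable {L : Finset ℚ}

lemma gSeg_le_gSeg {s t : Finset ℚ} (hst : s ⊆ t) : gSeg L t ≤ gSeg L s :=
  Nat.le_of_dvd (Nat.gcd_pos_of_pos_left _ (ram_pos L)) <|
    Nat.dvd_gcd (Nat.gcd_dvd_left _ _) ((Nat.gcd_dvd_right _ _).trans (gcd_mono hst))

lemma gSeg_empty (L : Finset ℚ) : gSeg L ∅ = ram L := by simp [gSeg]

/-- `gcd(r, s)` for a non-integral level `k` with numerator `s` is a proper divisor of `r`. -/
lemma two_mul_gSeg_singleton_le {k : ℚ} (hk : k ∈ L) (hden : k.den ≠ 1) :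
    2 * gSeg L {k} ≤ ram L := by
  have hg : gSeg L {k} = Nat.gcd (ram L) (numer L k).natAbs := by
    rw [gSeg, gcd_singleton, normalize_eq]
  by_contra! hlt
  rw [hg] at hlt
  have heq := Nat.eq_of_dvd_of_lt_two_mul (ram_pos L).ne' (Nat.gcd_dvd_left _ _) hlt
  obtain ⟨m, hm⟩ : (ram L : ℤ) ∣ numer L k :=
    Int.dvd_natAbs.1 (Int.natCast_dvd_natCast.2 (Nat.gcd_eq_left_iff_dvd.1 heq.symm))
  have hkm : k = m := by
    have h : k * ram L = m * ram L := by
      rw [← cast_numer hk, hm]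
      push_cast
      ring
    exact mul_right_cancel₀ (by exact_mod_cast (ram_pos L).ne') h
  exact hden (hkm ▸ Rat.den_intCast m)

end Gcds

/-- The coefficient `(s₀,…,s_{i−1},r) − (s₀,…,s_i,r)` of `s_i = numer L k` in `B L`. -/
def coeffB (L : Finset ℚ) (k : ℚ) : ℤ :=
  gSeg L (L.filter (k < ·)) - gSeg L (L.filter (k ≤ ·))

section BoundsOnB

variable {L : Finset ℚ}

lemma B_eq_sum_coeffB (L : Finset ℚ) :
    B L = ∑ k ∈ L, coeffB L k * numer L k - (ram L : ℤ) ^ 2 + 1 := rfl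

lemma coeffB_nonneg (L : Finset ℚ) (k : ℚ) : 0 ≤ coeffB L k :=
  sub_nonneg.2 <| by
    exact_mod_cast gSeg_le_gSeg (monotone_filter_right L fun x _ (hx : k < x) => hx.le)

lemma sum_coeffB (L : Finset ℚ) : ∑ k ∈ L, coeffB L k = ram L - gSeg L L := by
  unfold coeffB
  simpa only [gSeg_empty] using sum_filter_lt_sub_filter_le (fun s => (gSeg L s : ℤ)) L

lemma B_le (hne : L.Nonempty) (h0 : 0 < L.max' hne) :
    B L ≤ (ram L - 1) * numer L (L.max' hne) - (ram L : ℤ) ^ 2 + 1 := by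
  have hmem := max'_mem L hne
  have hsum : ∑ k ∈ L, coeffB L k * numer L k ≤ (ram L - gSeg L L) * numer L (L.max' hne) := by
    rw [← sum_coeffB, sum_mul]
    exact sum_le_sum fun k hk => mul_le_mul_of_nonneg_left
      (numer_le_numer hk hmem (le_max' L k hk)) (coeffB_nonneg L k)
  have hg : (1 : ℤ) ≤ gSeg L L := by exact_mod_cast Nat.gcd_pos_of_pos_left _ (ram_pos L)
  have hs := numer_pos hmem h0
  rw [B_eq_sum_coeffB]
  nlinarith

lemma le_B (hpos : ∀ k ∈ L, 0 < k) (hne : L.Nonempty) :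
    (ram L - gSeg L {L.max' hne}) * numer L (L.max' hne) - (ram L : ℤ) ^ 2 + 1 ≤ B L := by
  have h : coeffB L (L.max' hne) * numer L (L.max' hne) ≤ ∑ k ∈ L, coeffB L k * numer L k :=
    single_le_sum (fun k hk => mul_nonneg (coeffB_nonneg L k) (numer_pos hk (hpos k hk)).le)
      (max'_mem L hne)
  rw [coeffB, filter_max'_lt, filter_max'_le, gSeg_empty] at h
  rw [B_eq_sum_coeffB]
  linarith

end BoundsOnB

namespace IsLevelDatum

variable {L : Finset ℚ}

lemma den_max'_ne_one (hL : IsLevelDatum L) (hne : L.Nonempty) : (L.max' hne).den ≠ 1 := by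
  have h := hL.2.1 _ (max'_mem L hne)
  rw [segLcm, filter_max'_le, lcm_singleton, normalize_eq] at h
  omega

lemma two_le_ram (hL : IsLevelDatum L) (hne : L.Nonempty) : 2 ≤ ram L := by
  have h := Nat.le_of_dvd (ram_pos L) (den_dvd_ram (max'_mem L hne))
  have := (L.max' hne).den_pos
  have := hL.den_max'_ne_one hne
  omega

lemma B_neg_of_max'_lt_one (hL : IsLevelDatum L) (hne : L.Nonempty) (hlt : L.max' hne < 1) :
    B L < 0 := by
  have hmem := max'_mem L hne
  have hr : (2 : ℤ) ≤ ram L := by exact_mod_cast hL.two_le_ram hne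
  have hs : numer L (L.max' hne) < ram L := by
    have h : (numer L (L.max' hne) : ℚ) < ram L := by
      rw [cast_numer hmem]
      exact mul_lt_of_lt_one_left (by exact_mod_cast ram_pos L) hlt
    exact_mod_cast h
  have hs0 := numer_pos hmem (hL.1 _ hmem)
  nlinarith [B_le hne (hL.1 _ hmem)]

lemma ram_add_two_le_two_mul_B (hL : IsLevelDatum L) (hne : L.Nonempty) (hgt : 2 < L.max' hne) :
    (ram L : ℤ) + 2 ≤ 2 * B L := by
  have hmem := max'_mem L hne
  have hg : 2 * (gSeg L {L.max' hne} : ℤ) ≤ ram L := by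
    exact_mod_cast two_mul_gSeg_singleton_le hmem (hL.den_max'_ne_one hne)
  have hs : 2 * (ram L : ℤ) < numer L (L.max' hne) := by
    have h : 2 * (ram L : ℚ) < numer L (L.max' hne) := by
      rw [cast_numer hmem]
      exact mul_lt_mul_of_pos_right hgt (by exact_mod_cast ram_pos L)
    exact_mod_cast h
  nlinarith [le_B hL.1 hne]

lemma max'_le_B_add_ram_sq (hL : IsLevelDatum L) (hne : L.Nonempty) :
    L.max' hne ≤ B L + (ram L : ℚ) ^ 2 := by
  have hmem := max'_mem L hne
  have hg : 2 * (gSeg L {L.max' hne} : ℤ) ≤ ram L := by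
    exact_mod_cast two_mul_gSeg_singleton_le hmem (hL.den_max'_ne_one hne)
  have hg0 : (0 : ℤ) < gSeg L {L.max' hne} := by
    exact_mod_cast Nat.gcd_pos_of_pos_left _ (ram_pos L)
  have hs := numer_pos hmem (hL.1 _ hmem)
  have hsB : numer L (L.max' hne) ≤ B L + (ram L : ℤ) ^ 2 := by
    nlinarith [le_B hL.1 hne]
  have hk : L.max' hne ≤ numer L (L.max' hne) := by
    rw [cast_numer hmem]
    exact le_mul_of_one_le_right (hL.1 _ hmem).le (by exact_mod_cast ram_pos L)
  exact hk.trans (by exact_mod_cast hsB)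

end IsLevelDatum

/-- Each level `k` is `s/r` with `s = k·Ram(L) ≤ M·R` and `r = Ram(L) ≤ R`. -/
lemma finite_setOf_ram_le (R M : ℕ) :
    {L : Finset ℚ | ram L ≤ R ∧ ∀ k ∈ L, 0 < k ∧ k ≤ M}.Finite := by
  let S : Finset ℚ := (Icc (1 : ℤ) (M * R) ×ˢ Icc 1 R).image fun p => (p.1 : ℚ) / p.2
  refine S.powerset.finite_toSet.subset fun L ⟨hR, hL⟩ => mem_powerset.2 fun k hk => ?_
  have hr : (0 : ℚ) < ram L := by exact_mod_cast ram_pos L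
  have hsR : numer L k ≤ M * R := by
    have h : (numer L k : ℚ) ≤ M * R := by
      rw [cast_numer hk]
      exact mul_le_mul (hL k hk).2 (by exact_mod_cast hR) hr.le (Nat.cast_nonneg M)
    exact_mod_cast h
  refine mem_image.2 ⟨(numer L k, ram L), mem_product.2
    ⟨mem_Icc.2 ⟨numer_pos hk (hL k hk).1, hsR⟩, mem_Icc.2 ⟨ram_pos L, hR⟩⟩, ?_⟩
  rw [cast_numer hk]
  field_simp

/-- for every `n ≥ 0`, the set of locally minimal level data at infinity
with `B_L = 2n` is finite. -/
theorem stmt_1 (n : ℕ) :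
    {L : Finset ℚ | IsLevelDatum L ∧ LocallyMinimal L ∧ B L = 2 * (n : ℤ)}.Finite := by
  refine (finite_setOf_ram_le (4 * n + 1) (2 * n + (4 * n + 1) ^ 2)).subset ?_
  rintro L ⟨hL, hmin, hB⟩
  rcases L.eq_empty_or_nonempty with rfl | hne
  · simp [ram]
  rw [LocallyMinimal, maxLevel_eq_max' hne] at hmin
  rcases hmin with rfl | hlt | hgt
  · simp at hne
  · have := hL.B_neg_of_max'_lt_one hne hlt
    omega
  have hr : ram L ≤ 4 * n + 1 := by
    have := hL.ram_add_two_le_two_mul_B hne hgt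
    omega
  refine ⟨hr, fun k hk => ⟨hL.1 k hk, ?_⟩⟩
  have hk₀ := hL.max'_le_B_add_ram_sq hne
  rw [hB] at hk₀
  calc k ≤ L.max' hne := le_max' L k hk
    _ ≤ 2 * n + (ram L : ℚ) ^ 2 := by exact_mod_cast hk₀
    _ ≤ _ := by
      push_cast
      gcongr
      exact_mod_cast hr
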